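/- Let M and N be virtually simple R-modules with N projective. If M is not isomorphic to N, then Hom_R(M, N) = 0. -/
import Mathlib


def VirtuallySimple (R : Type*) [Ring R] (M : Type*) [AddCommGroup M] [Module R M] : Prop :=
  Nontrivial M ∧ ∀ N : Submodule R M, N ≠ ⊥ → Nonempty (N ≃ₗ[R] M)

/-- If `M`, `N` are virtually simple, `N` is projective and `M ≇ N`, then `Hom_R(M,N) = 0`. -/
theorem stmt7 (R : Type*) [Ring R] (M N : Type*) [AddCommGroup M] [Module R M]
    [AddCommGroup N] [Module R N] (hM : VirtuallySimple R M) (hN : VirtuallySimple R N)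
    (hproj : Module.Projective R N) (hiso : IsEmpty (M ≃ₗ[R] N)) :
    ∀ f : M →ₗ[R] N, f = 0 := by
  intro f
  by_contra hf
  have hrange : LinearMap.range f ≠ ⊥ := by
    simpa [LinearMap.range_eq_bot] using hf
  obtain ⟨e⟩ := hN.2 (LinearMap.range f) hrange
  -- surjection π : M → N
  set π : M →ₗ[R] N := e.toLinearMap ∘ₗ f.rangeRestrict with hπ
  have hπsurj : Function.Surjective π := by
    simpa [hπ, LinearMap.coe_comp] using
      e.surjective.comp f.surjective_rangeRestrict
  obtain ⟨s, hs⟩ := Module.projective_lifting_property π LinearMap.id hπsurj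
  have hsinj : Function.Injective s := by
    have : Function.Injective (π ∘ₗ s) := by rw [hs]; exact fun a b h => h
    exact Function.Injective.of_comp (f := π) this
  have hrs : LinearMap.range s ≠ ⊥ := by
    intro h
    rw [LinearMap.range_eq_bot] at h
    obtain ⟨x, y, hxy⟩ := hN.1
    exact hxy (hsinj (by simp [h]))
  obtain ⟨e2⟩ := hM.2 (LinearMap.range s) hrs
  have e3 : N ≃ₗ[R] ↥(LinearMap.range s) := LinearEquiv.ofInjective s hsinj
  exact hiso.elim (e3.trans e2).symm
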